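/- Let f be a continuous self-map of the closed annulus [0,1] × S¹ of degree d with |d| > 1. Then f is semiconjugate to m_d : S¹ → S¹; that is, there exists a continuous surjective map h : [0,1] × S¹ → S¹ with h∘f = m_d∘h and h inducing an isomorphism on first homology. -/

import Mathlib

/-! Lift `f` to `F` on the strip `[0,1] × ℝ`. Since `F (x, y + 1) = F (x, y) + (0, d)`, the
displacement `(F p).2 - d * p.2` is `1`-periodic in `y`, hence bounded by compactness. The
increments of `(F^[n] p).2 / d ^ n` are displacements divided by `d ^ (n + 1)`, so for `|d| > 1`
these converge uniformly to a continuous `H` with `H ∘ F = d • H` and `H (x, y + 1) = H (x, y) + 1`.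
Such an `H` descends to a degree-one map `h : Ā → S¹` semiconjugating `f` to `m_d`, and `h` is onto
because `y ↦ H (x, y)` is already onto `ℝ`. -/

noncomputable section

abbrev S1 := AddCircle (1 : ℝ)

def proj : ℝ → S1 := fun x => (x : S1)

def md (d : ℤ) : S1 → S1 := fun z => d • z

/-- The closed annulus `Ā = [0,1] × S¹`. -/
abbrev ClAnn := Set.Icc (0 : ℝ) 1 × S1

/-- Its universal cover `[0,1] × ℝ`. -/
abbrev ClAnnCov := Set.Icc (0 : ℝ) 1 × ℝ

def cproj : ClAnnCov → ClAnn := fun p => (p.1, proj p.2)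

lemma proj_add_intCast (x : ℝ) (k : ℤ) : proj (x + k) = proj x := by
  simp [proj]

lemma exists_intCast_add_of_proj_eq {x y : ℝ} (h : proj x = proj y) : ∃ k : ℤ, y = x + k := by
  obtain ⟨k, hk⟩ := AddSubgroup.mem_zmultiples_iff.1 (QuotientAddGroup.eq.1 h)
  exact ⟨k, by simp at hk; linarith⟩

lemma proj_intCast_mul (d : ℤ) (x : ℝ) : proj (d * x) = md d (proj x) := by
  simp [proj, md, ← zsmul_eq_mul]

lemma surjective_of_map_add_intCast {φ : ℝ → ℝ} (hφ : Continuous φ)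
    (hper : ∀ t (k : ℤ), φ (t + k) = φ t + k) : Function.Surjective φ := by
  intro v
  set k := ⌊v - φ 0⌋
  have hk : φ k = φ 0 + k := by simpa using hper 0 k
  have hk1 : φ (k + 1) = φ 0 + k + 1 := by simpa [add_assoc] using hper 0 (k + 1)
  have hv : v ∈ Set.Icc (φ k) (φ (k + 1)) := by
    rw [hk, hk1]
    constructor <;> linarith [Int.floor_le (v - φ 0), Int.lt_floor_add_one (v - φ 0)]
  obtain ⟨t, -, ht⟩ := intermediate_value_Icc (by linarith) hφ.continuousOn hv
  exact ⟨t, ht⟩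

section Descent

variable {X : Type*} [TopologicalSpace X]

lemma isQuotientMap_prodMap_proj : Topology.IsQuotientMap (Prod.map id proj : X × ℝ → X × S1) :=
  (IsOpenMap.id.prodMap QuotientAddGroup.isOpenMap_coe).isQuotientMap
    (continuous_id.prodMap continuous_quotient_mk')
    (Function.surjective_id.prodMap QuotientAddGroup.mk_surjective)

lemma exists_descent_of_map_add_intCast [Nonempty X] {H : X × ℝ → ℝ} (hH : Continuous H)
    (hper : ∀ p (k : ℤ), H (p.1, p.2 + k) = H p + k) :
    ∃ h : X × S1 → S1, Continuous h ∧ Function.Surjective h ∧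
      ∀ p, h (p.1, proj p.2) = proj (H p) := by
  have hfactors : (proj ∘ H).FactorsThrough (Prod.map id proj) := by
    rintro ⟨x, y⟩ ⟨x', y'⟩ hxy
    obtain ⟨rfl, hy⟩ := Prod.ext_iff.1 hxy
    obtain ⟨k, rfl⟩ := exists_intCast_add_of_proj_eq hy
    simp [hper (x, y) k, proj_add_intCast]
  let h := Function.extend (Prod.map id proj) (proj ∘ H) fun _ => 0
  have hcomp : h ∘ Prod.map id proj = proj ∘ H := funext (hfactors.extend_apply (fun _ => 0))
  refine ⟨h, ?_, ?_, fun p => congrFun hcomp p⟩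
  · rw [isQuotientMap_prodMap_proj.continuous_iff, hcomp]
    exact continuous_quotient_mk'.comp hH
  · intro z
    obtain ⟨x⟩ := ‹Nonempty X›
    obtain ⟨y, rfl⟩ := QuotientAddGroup.mk_surjective z
    obtain ⟨t, ht⟩ := surjective_of_map_add_intCast (hH.comp (Continuous.prodMk_right x))
      (fun t k => hper (x, t) k) y
    exact ⟨(x, proj t), (congrFun hcomp (x, t)).trans (congrArg proj ht)⟩

end Descent

section Lift

variable {X : Type*} {d : ℤ} {F : X × ℝ → X × ℝ}

def IsLiftOfDegree (d : ℤ) (F : X × ℝ → X × ℝ) : Prop :=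
  ∀ p : X × ℝ, F (p.1, p.2 + 1) = ((F p).1, (F p).2 + d)

def displacement (d : ℤ) (F : X × ℝ → X × ℝ) (p : X × ℝ) : ℝ := (F p).2 - d * p.2

lemma map_add_intCast (hdeg : IsLiftOfDegree d F) (p : X × ℝ) (k : ℤ) :
    F (p.1, p.2 + k) = ((F p).1, (F p).2 + (k * d : ℤ)) := by
  induction k using Int.induction_on with
  | zero => simp
  | succ k ih =>
    have h := hdeg (p.1, p.2 + (k : ℤ))
    dsimp only at h
    rw [ih] at h
    convert h using 2
    · push_cast; rw [add_assoc]
    · push_cast; ring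
  | pred k ih =>
    have h := hdeg (p.1, p.2 + (-k - 1 : ℤ))
    have hshift : p.2 + ((-k - 1 : ℤ) : ℝ) + 1 = p.2 + (-k : ℤ) := by push_cast; ring
    dsimp only at h
    rw [hshift, ih, Prod.ext_iff] at h
    ext
    · exact h.1.symm
    · push_cast at h ⊢; linarith [h.2]

lemma iterate_add_intCast (hdeg : IsLiftOfDegree d F)
    (n : ℕ) (p : X × ℝ) (k : ℤ) :
    F^[n] (p.1, p.2 + k) = ((F^[n] p).1, (F^[n] p).2 + (k * d ^ n : ℤ)) := by
  induction n generalizing p k with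
  | zero => simp
  | succ n ih =>
    rw [Function.iterate_succ_apply, Function.iterate_succ_apply, map_add_intCast hdeg, ih]
    ext
    · rfl
    · push_cast; ring

lemma displacement_add_intCast (hdeg : IsLiftOfDegree d F)
    (p : X × ℝ) (k : ℤ) : displacement d F (p.1, p.2 + k) = displacement d F p := by
  simp only [displacement, map_add_intCast hdeg]
  push_cast
  ring

lemma continuous_displacement [TopologicalSpace X] (hF : Continuous F) :
    Continuous (displacement d F) :=
  (continuous_snd.comp hF).sub (continuous_const.mul continuous_snd)

lemma exists_abs_displacement_le [TopologicalSpace X] [CompactSpace X] (hF : Continuous F)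
    (hdeg : IsLiftOfDegree d F) : ∃ C, ∀ p, |displacement d F p| ≤ C := by
  obtain ⟨C, hC⟩ := (isCompact_univ.prod isCompact_Icc).exists_bound_of_continuousOn
    (s := Set.univ ×ˢ Set.Icc (0 : ℝ) 1) (continuous_displacement hF).continuousOn
  refine ⟨C, fun p => ?_⟩
  have hfract : (p.1, Int.fract p.2) ∈ Set.univ ×ˢ Set.Icc (0 : ℝ) 1 :=
    ⟨trivial, Int.fract_nonneg _, (Int.fract_lt_one _).le⟩
  have h := displacement_add_intCast hdeg (p.1, Int.fract p.2) ⌊p.2⌋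
  simp only [Int.fract_add_floor] at h
  simpa [h] using hC _ hfract

def semiconjLift (d : ℤ) (F : X × ℝ → X × ℝ) (p : X × ℝ) : ℝ :=
  p.2 + ∑' n : ℕ, displacement d F (F^[n] p) / d ^ (n + 1)

lemma abs_displacement_iterate_div_le {C : ℝ} (hC : ∀ p, |displacement d F p| ≤ C)
    (n : ℕ) (p : X × ℝ) :
    |displacement d F (F^[n] p) / d ^ (n + 1)| ≤ C * |(d : ℝ)|⁻¹ ^ (n + 1) := by
  rw [abs_div, abs_pow, inv_pow, ← div_eq_mul_inv]
  exact div_le_div_of_nonneg_right (hC _) (by positivity)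

lemma summable_mul_inv_abs_pow_succ (hd : 1 < |d|) (C : ℝ) :
    Summable fun n : ℕ => C * |(d : ℝ)|⁻¹ ^ (n + 1) := by
  have hd' : 1 < |(d : ℝ)| := by exact_mod_cast hd
  exact ((summable_nat_add_iff 1).2
    (summable_geometric_of_lt_one (by positivity) (inv_lt_one_of_one_lt₀ hd'))).mul_left C

lemma continuous_semiconjLift [TopologicalSpace X] (hF : Continuous F) (hd : 1 < |d|) {C : ℝ}
    (hC : ∀ p, |displacement d F p| ≤ C) : Continuous (semiconjLift d F) :=
  continuous_snd.add <| continuous_tsum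
    (fun n => ((continuous_displacement hF).comp (hF.iterate n)).div_const _)
    (summable_mul_inv_abs_pow_succ hd C) (abs_displacement_iterate_div_le hC)

lemma semiconjLift_map (hd : 1 < |d|) {C : ℝ} (hC : ∀ p, |displacement d F p| ≤ C)
    (p : X × ℝ) : semiconjLift d F (F p) = d * semiconjLift d F p := by
  have hd0 : (d : ℝ) ≠ 0 := Int.cast_ne_zero.2 (abs_pos.1 (one_pos.trans hd))
  have hsum : Summable fun n => displacement d F (F^[n] p) / d ^ (n + 1) :=
    (summable_mul_inv_abs_pow_succ hd C).of_norm_bounded (abs_displacement_iterate_div_le hC · p)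
  have hterm : ∀ n : ℕ, d * (displacement d F (F^[n + 1] p) / d ^ (n + 1 + 1)) =
      displacement d F (F^[n] (F p)) / d ^ (n + 1) := by
    intro n
    rw [Function.iterate_succ_apply, pow_succ, mul_div_assoc', mul_comm, mul_div_mul_right _ _ hd0]
  rw [semiconjLift, semiconjLift, hsum.tsum_eq_zero_add, mul_add, mul_add, ← tsum_mul_left]
  simp only [hterm, Function.iterate_zero_apply, zero_add, pow_one]
  rw [mul_div_cancel₀ _ hd0, displacement]
  ring

lemma semiconjLift_add_intCast (hdeg : IsLiftOfDegree d F)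
    (p : X × ℝ) (k : ℤ) : semiconjLift d F (p.1, p.2 + k) = semiconjLift d F p + k := by
  simp only [semiconjLift, iterate_add_intCast hdeg, displacement_add_intCast hdeg]
  ring

end Lift

theorem closed_annulus_semiconjugate_general
    (d : ℤ) (hd : 1 < |d|)
    (f : ClAnn → ClAnn)
    (F : ClAnnCov → ClAnnCov) (hF : Continuous F)
    (hliftF : ∀ p : ClAnnCov, cproj (F p) = f (cproj p))
    (hdeg : ∀ (x : Set.Icc (0:ℝ) 1) (y : ℝ),
      (F (x, y + 1)).1 = (F (x, y)).1 ∧ (F (x, y + 1)).2 = (F (x, y)).2 + d) :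
    ∃ h : ClAnn → S1, Continuous h ∧ Function.Surjective h ∧
      (∀ a, h (f a) = md d (h a)) ∧
      ∃ e : ℤ, (e = 1 ∨ e = -1) ∧ ∃ H : ClAnnCov → ℝ, Continuous H ∧
        (∀ p, proj (H p) = h (cproj p)) ∧
        ∀ (x : Set.Icc (0:ℝ) 1) (y : ℝ), H (x, y + 1) = H (x, y) + e := by
  have hdeg' : IsLiftOfDegree d F :=
    fun p => Prod.ext (hdeg p.1 p.2).1 (hdeg p.1 p.2).2
  obtain ⟨C, hC⟩ := exists_abs_displacement_le hF hdeg'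
  have hH := continuous_semiconjLift hF hd hC
  have hHint := semiconjLift_add_intCast hdeg'
  obtain ⟨h, hcont, hsurj, hcomm⟩ := exists_descent_of_map_add_intCast hH hHint
  refine ⟨h, hcont, hsurj, ?_, 1, Or.inl rfl, semiconjLift d F, hH, fun p => (hcomm p).symm,
    fun x y => by simpa using hHint (x, y) 1⟩
  rintro ⟨x, z⟩
  obtain ⟨y, rfl⟩ := QuotientAddGroup.mk_surjective z
  calc h (f (cproj (x, y))) = proj (semiconjLift d F (F (x, y))) := by rw [← hliftF]; exact hcomm _
    _ = md d (proj (semiconjLift d F (x, y))) := by rw [semiconjLift_map hd hC, proj_intCast_mul]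
    _ = md d (h (cproj (x, y))) := by rw [← hcomm]; rfl

/-- a continuous self-map of the closed annulus of degree `d`,
`|d|>1`, is semiconjugate to `m_d : S¹ → S¹`: there is a continuous surjection
`h` with `h∘f = m_d∘h` inducing an isomorphism on first homology (i.e. lifting
to `H` with `H(x,y+1) = H(x,y) ± 1`). -/
theorem closed_annulus_semiconjugate
    (d : ℤ) (hd : 1 < |d|)
    (f : ClAnn → ClAnn) (hf : Continuous f)
    (F : ClAnnCov → ClAnnCov) (hF : Continuous F)
    (hliftF : ∀ p : ClAnnCov, cproj (F p) = f (cproj p))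
    (hdeg : ∀ (x : Set.Icc (0:ℝ) 1) (y : ℝ),
      (F (x, y + 1)).1 = (F (x, y)).1 ∧ (F (x, y + 1)).2 = (F (x, y)).2 + d) :
    ∃ h : ClAnn → S1, Continuous h ∧ Function.Surjective h ∧
      (∀ a, h (f a) = md d (h a)) ∧
      ∃ e : ℤ, (e = 1 ∨ e = -1) ∧ ∃ H : ClAnnCov → ℝ, Continuous H ∧
        (∀ p, proj (H p) = h (cproj p)) ∧
        ∀ (x : Set.Icc (0:ℝ) 1) (y : ℝ), H (x, y + 1) = H (x, y) + e :=
  closed_annulus_semiconjugate_general d hd f F hF hliftF hdeg
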